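/- arXiv:2201.01676 — 3 statements merged into one kernel-verified Lean document; each statement's English description precedes it below -/
import Mathlib

section
/- Li₂((3−√5)/2) = π²/15 − (log φ)², where φ = (√5+1)/2. -/
/-- The polylogarithm `Li_s(x) = ∑_{n ≥ 1} x^n / n^s` as a real series. -/
noncomputable def Li (s : ℕ) (x : ℝ) : ℝ := ∑' n : ℕ, x ^ (n + 1) / (n + 1 : ℝ) ^ s

/-!
With `y = φ⁻¹` one has `y² = 1 - y` and `y² / (y² - 1) = -y`. Euler's reflection formula
`Li₂ x + Li₂ (1 - x) = π² / 6 - log x · log (1 - x)` and Landen's identity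
`Li₂ x + Li₂ (x / (x - 1)) = -½ log² (1 - x)`, both at `x = y²`, together with the duplication
formula `Li₂ y + Li₂ (-y) = ½ Li₂ (y²)`, are then three linear equations in `Li₂ (y²)`, `Li₂ y`
and `Li₂ (-y)` which determine `Li₂ (y²)`. The two functional equations are proved by showing
that their left-hand sides have derivative zero, from `Li₂' x = -log (1 - x) / x`, and letting
`x → 0⁺`.
-/

open Real Filter Set Topology goldenRatio

lemma summable_one_div_succ_pow {s : ℕ} (hs : 1 < s) :
    Summable (fun n : ℕ => 1 / ((n : ℝ) + 1) ^ s) := by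
  simpa using (summable_nat_add_iff 1).2 (Real.summable_one_div_nat_pow.2 hs)

lemma norm_pow_div_succ_pow_le {m n s : ℕ} {x : ℝ} :
    ‖x ^ m / ((n : ℝ) + 1) ^ s‖ ≤ |x| ^ m := by
  rw [norm_div, norm_pow, norm_pow, Real.norm_eq_abs, Real.norm_eq_abs,
    abs_of_pos (n.cast_add_one_pos (α := ℝ))]
  exact div_le_self (by positivity) (one_le_pow₀ (by linarith [n.cast_nonneg (α := ℝ)]))

lemma summable_Li_of_abs_lt_one (s : ℕ) {x : ℝ} (hx : |x| < 1) :
    Summable (fun n : ℕ => x ^ (n + 1) / ((n : ℝ) + 1) ^ s) :=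
  Summable.of_norm_bounded ((summable_nat_add_iff 1).2 <|
    summable_geometric_of_lt_one (abs_nonneg x) hx) fun _ => norm_pow_div_succ_pow_le

lemma continuousOn_Li {s : ℕ} (hs : 1 < s) : ContinuousOn (Li s) (Icc (-1) 1) := by
  refine continuousOn_tsum (fun _ => (continuous_pow _).div_const _ |>.continuousOn)
    (summable_one_div_succ_pow hs) fun n x hx => ?_
  rw [norm_div, norm_pow, norm_pow, Real.norm_eq_abs, Real.norm_eq_abs,
    abs_of_pos (n.cast_add_one_pos (α := ℝ))]
  gcongr
  exact pow_le_one₀ (abs_nonneg x) (abs_le.2 hx)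

@[simp]
lemma Li_zero_right (s : ℕ) : Li s 0 = 0 := by
  simp [Li]

lemma Li_two_one : Li 2 1 = π ^ 2 / 6 := by
  have := (hasSum_nat_add_iff (f := fun n : ℕ => 1 / (n : ℝ) ^ 2) 1).2
    (by simpa using hasSum_zeta_two)
  simpa [Li] using this.tsum_eq

lemma Li_one_eq_neg_log {x : ℝ} (hx : |x| < 1) : Li 1 x = -log (1 - x) := by
  simpa [Li] using (hasSum_pow_div_log_of_abs_lt_one hx).tsum_eq

lemma hasDerivAt_Li_succ {s : ℕ} {x : ℝ} (hx : |x| < 1) (hx0 : x ≠ 0) :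
    HasDerivAt (Li (s + 1)) (Li s x / x) x := by
  obtain ⟨r, hxr, hr1⟩ := exists_between hx
  have hderiv := hasDerivAt_tsum_of_isPreconnected (u := fun n : ℕ => r ^ n)
    (g := fun (n : ℕ) (z : ℝ) => z ^ (n + 1) / ((n : ℝ) + 1) ^ (s + 1))
    (g' := fun (n : ℕ) (z : ℝ) => z ^ n / ((n : ℝ) + 1) ^ s)
    (summable_geometric_of_lt_one ((abs_nonneg x).trans hxr.le) hr1) Metric.isOpen_ball
    (convex_ball (0 : ℝ) r).isPreconnected
    (fun n z _ => ((hasDerivAt_pow (n + 1) z).div_const _).congr_deriv (by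
      push_cast; field_simp; ring))
    (fun n z hz => norm_pow_div_succ_pow_le.trans
      (pow_le_pow_left₀ (abs_nonneg z) (mem_ball_zero_iff.1 hz).le n))
    (mem_ball_zero_iff.2 hxr) (summable_Li_of_abs_lt_one _ hx) (mem_ball_zero_iff.2 hxr)
  have hquot : Li s x / x = ∑' n : ℕ, x ^ n / ((n : ℝ) + 1) ^ s := by
    rw [Li, ← tsum_div_const]
    congr 1 with n
    field_simp
    ring
  exact hquot ▸ hderiv

lemma hasDerivAt_Li_two {x : ℝ} (hx : |x| < 1) (hx0 : x ≠ 0) :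
    HasDerivAt (Li 2) (-log (1 - x) / x) x :=
  Li_one_eq_neg_log hx ▸ hasDerivAt_Li_succ hx hx0

lemma Filter.Tendsto.Li {α : Type*} {s : ℕ} (hs : 1 < s) {l : Filter α} {g : α → ℝ} {a : ℝ}
    (hg : Tendsto g l (𝓝 a)) (hmem : ∀ᶠ z in l, g z ∈ Icc (-1) 1) (ha : a ∈ Icc (-1) 1) :
    Tendsto (fun z => Li s (g z)) l (𝓝 (Li s a)) :=
  (continuousOn_Li hs a ha).tendsto.comp (tendsto_nhdsWithin_iff.2 ⟨hg, hmem⟩)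

lemma tendsto_log_mul_log_one_sub_nhdsGT_zero :
    Tendsto (fun x => log x * log (1 - x)) (𝓝[>] 0) (𝓝 0) := by
  have hslope : Tendsto (fun x => log (1 - x) / x) (𝓝[>] 0) (𝓝 (-1)) := by
    simpa [div_eq_inv_mul] using
      (((hasDerivAt_id (0 : ℝ)).const_sub 1).log (by norm_num)).tendsto_slope_zero_right
  have hmul_log : Tendsto (fun x => x * log x) (𝓝[>] 0) (𝓝 0) := by
    simpa using (continuous_mul_log.tendsto 0).mono_left nhdsWithin_le_nhds
  have hprod := hmul_log.mul hslope
  rw [zero_mul] at hprod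
  refine hprod.congr' ?_
  filter_upwards [self_mem_nhdsWithin] with x (hx : 0 < x)
  field_simp

lemma eq_of_hasDerivAt_eq_zero_of_tendsto_nhdsGT {F : ℝ → ℝ} {a b L x : ℝ}
    (hderiv : ∀ z ∈ Ioo a b, HasDerivAt F 0 z) (hlim : Tendsto F (𝓝[>] a) (𝓝 L))
    (hx : x ∈ Ioo a b) : F x = L := by
  have hconst : ∀ z ∈ Ioo a b, F x = F z := fun z hz =>
    isOpen_Ioo.is_const_of_deriv_eq_zero isPreconnected_Ioo
      (fun w hw => (hderiv w hw).differentiableAt.differentiableWithinAt)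
      (fun w hw => (hderiv w hw).deriv) hx hz
  refine tendsto_nhds_unique (tendsto_const_nhds.congr' ?_) hlim
  filter_upwards [Ioo_mem_nhdsGT (hx.1.trans hx.2)] using hconst

theorem Li_two_add_Li_two_one_sub {x : ℝ} (hx : x ∈ Ioo 0 1) :
    Li 2 x + Li 2 (1 - x) + log x * log (1 - x) = π ^ 2 / 6 := by
  refine eq_of_hasDerivAt_eq_zero_of_tendsto_nhdsGT
    (F := fun z => Li 2 z + Li 2 (1 - z) + log z * log (1 - z)) (fun z hz => ?_) ?_ hx
  · have hz1 : 0 < 1 - z := by linarith [hz.2]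
    have hLi := hasDerivAt_Li_two (by rw [abs_of_pos hz.1]; exact hz.2) hz.1.ne'
    have hLi_sub := (hasDerivAt_Li_two (by rw [abs_of_pos hz1]; linarith [hz.1]) hz1.ne').comp z
      ((hasDerivAt_id' z).const_sub 1)
    have hlog_sub := ((hasDerivAt_id' z).const_sub 1).log hz1.ne'
    refine ((hLi.add hLi_sub).add ((hasDerivAt_log hz.1.ne').mul hlog_sub)).congr_deriv ?_
    rw [sub_sub_cancel]
    field_simp
    ring
  · have hmem : Ioo (0 : ℝ) 1 ∈ 𝓝[>] 0 := Ioo_mem_nhdsGT one_pos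
    have hLi := Tendsto.Li (g := fun z => z) one_lt_two
      (tendsto_nhdsWithin_of_tendsto_nhds tendsto_id)
      (by filter_upwards [hmem] with z hz using ⟨by linarith [hz.1], hz.2.le⟩) (by norm_num)
    have hLi_sub := ((tendsto_nhdsWithin_of_tendsto_nhds
      ((continuous_sub_left (1 : ℝ)).tendsto 0))).Li one_lt_two
      (by filter_upwards [hmem] with z hz using ⟨by linarith [hz.2], by linarith [hz.1]⟩)
      (by norm_num)
    simpa [Li_two_one] using (hLi.add hLi_sub).add tendsto_log_mul_log_one_sub_nhdsGT_zero

lemma div_sub_one_mem_Ioo {x : ℝ} (hx : x ∈ Ioo 0 (1 / 2)) : x / (x - 1) ∈ Ioo (-1) 0 := by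
  have hx1 : x - 1 < 0 := by linarith [hx.2]
  exact ⟨(lt_div_iff_of_neg hx1).2 (by linarith [hx.2]), div_neg_of_pos_of_neg hx.1 hx1⟩

theorem Li_two_add_Li_two_div_sub_one {x : ℝ} (hx : x ∈ Ioo 0 (1 / 2)) :
    Li 2 x + Li 2 (x / (x - 1)) + log (1 - x) ^ 2 / 2 = 0 := by
  refine eq_of_hasDerivAt_eq_zero_of_tendsto_nhdsGT
    (F := fun z => Li 2 z + Li 2 (z / (z - 1)) + log (1 - z) ^ 2 / 2) (fun z hz => ?_) ?_ hx
  · have hz1 : 0 < 1 - z := by linarith [hz.2]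
    have hz0 : z ≠ 0 := hz.1.ne'
    have hz1' : z - 1 ≠ 0 := by linarith
    have hquot := div_sub_one_mem_Ioo hz
    have hLi := hasDerivAt_Li_two (by rw [abs_of_pos hz.1]; linarith [hz.2]) hz0
    have hLi_div := (hasDerivAt_Li_two (abs_lt.2 ⟨hquot.1, by linarith [hquot.2]⟩)
      hquot.2.ne).comp z ((hasDerivAt_id' z).div ((hasDerivAt_id' z).sub_const 1) hz1')
    have hlog_sub := ((hasDerivAt_id' z).const_sub 1).log hz1.ne'
    refine ((hLi.add hLi_div).add ((hlog_sub.pow 2).div_const 2)).congr_deriv ?_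
    have h1 : 1 - z / (z - 1) = (1 - z)⁻¹ := by field_simp; ring
    rw [h1, log_inv]
    field_simp
    ring
  · have hmem : Ioo (0 : ℝ) (1 / 2) ∈ 𝓝[>] 0 := Ioo_mem_nhdsGT (by norm_num)
    have hLi := Tendsto.Li (g := fun z => z) one_lt_two
      (tendsto_nhdsWithin_of_tendsto_nhds tendsto_id)
      (by filter_upwards [hmem] with z hz using ⟨by linarith [hz.1], by linarith [hz.2]⟩)
      (by norm_num)
    have hquot : ContinuousAt (fun z : ℝ => z / (z - 1)) 0 := by fun_prop (disch := norm_num)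
    have hLi_div := (hquot.tendsto.mono_left nhdsWithin_le_nhds).Li one_lt_two
      (by filter_upwards [hmem] with z hz using
        ⟨(div_sub_one_mem_Ioo hz).1.le, (div_sub_one_mem_Ioo hz).2.le.trans zero_le_one⟩)
      (by norm_num)
    have hlog : ContinuousAt (fun z : ℝ => log (1 - z) ^ 2 / 2) 0 := by fun_prop (disch := norm_num)
    simpa using (hLi.add hLi_div).add (hlog.tendsto.mono_left nhdsWithin_le_nhds)

theorem Li_add_Li_neg (s : ℕ) {y : ℝ} (hy : |y| < 1) :
    2 ^ s * (Li s y + Li s (-y)) = 2 * Li s (y ^ 2) := by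
  have hsum := ((summable_Li_of_abs_lt_one s hy).hasSum.add
    (summable_Li_of_abs_lt_one s (by rwa [abs_neg])).hasSum).mul_left (2 ^ s)
  have hsq : HasSum (fun n : ℕ => 2 * ((y ^ 2) ^ (n + 1) / ((n : ℝ) + 1) ^ s))
      (2 * Li s (y ^ 2)) := ((summable_Li_of_abs_lt_one s (by
    rw [abs_pow]; exact pow_lt_one₀ (abs_nonneg y) hy two_ne_zero)).hasSum).mul_left 2
  have hinj : Function.Injective (fun m : ℕ => 2 * m + 1) := fun a b h => by
    simp only at h; omega
  refine hsum.unique ((hinj.hasSum_iff fun n hn => ?_).1 ?_)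
  · obtain ⟨k, rfl⟩ := Nat.not_odd_iff_even.1 fun ⟨k, hk⟩ => hn ⟨k, hk.symm⟩
    rw [(Even.add_one ⟨k, rfl⟩).neg_pow, neg_div, add_neg_cancel, mul_zero]
  · refine hsq.congr_fun fun m => ?_
    have hm : (0 : ℝ) < m + 1 := m.cast_add_one_pos
    have heven : Even (2 * m + 1 + 1) := ⟨m + 1, by ring⟩
    rw [Function.comp_apply, heven.neg_pow,
      show 2 * m + 1 + 1 = 2 * (m + 1) by ring, pow_mul]
    push_cast
    rw [show (2 * (m : ℝ) + 1 + 1) = 2 * (m + 1) by ring, mul_pow]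
    field_simp
    ring

theorem Li_two_sq_of_sq_eq_one_sub {y : ℝ} (hy0 : 0 < y) (hy : y ^ 2 = 1 - y) :
    Li 2 (y ^ 2) = π ^ 2 / 15 - log y ^ 2 := by
  have hy1 : y < 1 := by nlinarith
  have hsq_lt : y ^ 2 < 1 / 2 := by nlinarith
  have hcompl : 1 - y ^ 2 = y := by linarith
  have hquot : y ^ 2 / (y ^ 2 - 1) = -y := by
    rw [show y ^ 2 - 1 = -y by linarith]
    field_simp
  have hrefl := Li_two_add_Li_two_one_sub (x := y ^ 2) ⟨by positivity, by linarith⟩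
  have hlanden := Li_two_add_Li_two_div_sub_one ⟨by positivity, hsq_lt⟩
  have hdup := Li_add_Li_neg 2 (by rwa [abs_of_pos hy0])
  rw [hcompl, log_pow] at hrefl
  rw [hquot, hcompl] at hlanden
  linear_combination (2 / 5) * hrefl + (2 / 5) * hlanden - (1 / 10) * hdup

theorem stmt_2 :
    Li 2 ((3 - Real.sqrt 5) / 2)
      = Real.pi ^ 2 / 15 - (Real.log ((Real.sqrt 5 + 1) / 2)) ^ 2 := by
  have hsq : φ⁻¹ ^ 2 = 1 - φ⁻¹ := by
    rw [inv_goldenRatio, neg_sq, goldenConj_sq]; ring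
  have hx : (3 - √5) / 2 = φ⁻¹ ^ 2 := by
    rw [hsq, inv_goldenRatio, goldenConj]; ring
  have hφ : (√5 + 1) / 2 = φ := by rw [add_comm]
  rw [hx, hφ, Li_two_sq_of_sq_eq_one_sub (inv_pos.2 goldenRatio_pos) hsq, log_inv, neg_sq]
end

section
/- Apéry's series: ∑_{n=1}^∞ (−1)^n / (n³ · binomial(2n, n)) = −(2/5)ζ(3). -/
/-- `ζ(3) = ∑_{n ≥ 1} 1/n³`. -/
noncomputable def zeta3 : ℝ := ∑' n : ℕ, 1 / (n + 1 : ℝ) ^ 3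

/-!
Van der Poorten's double telescoping ("A proof that Euler missed"). The partial-fraction identity
`∑_{k<m} a₀⋯a_{k-1} / ((x+a₀)⋯(x+a_k)) = 1/x - a₀⋯a_{m-1} / (x (x+a₀)⋯(x+a_{m-1}))`
at `x = n²`, `a_j = -(j+1)²` gives
`1/n³ + 2 (-1)ⁿ / (n³ C(2n,n)) = ∑_{k=1}^{n-1} (-1)^(k-1) (k-1)!² (n-k-1)! / (n+k)!`.
Each summand is `(-1)^(k-1) (ε_{n-1,k} - ε_{n,k})` with `ε_{n,k} = k!² (n-k)! / (2 k³ (n+k)!)`,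
so summing over `n ≤ N` telescopes in `n` to `∑_{k<N} (-1)^(k-1) (ε_{k,k} - ε_{N,k})`. Here
`ε_{k,k} = 1 / (2 k³ C(2k,k))` and `0 ≤ ε_{N,k} ≤ 1 / (2 k³ (N+1))`, so with `S` the sum of the
series, `N → ∞` gives `ζ(3) + 2S = -S/2`.
-/

open Finset Filter
open scoped Nat Topology

theorem Finset.sum_range_prod_div_prod_add {K : Type*} [Field K] {x : K} (hx : x ≠ 0)
    (a : ℕ → K) {m : ℕ} (ha : ∀ j < m, x + a j ≠ 0) :
    ∑ k ∈ range m, (∏ j ∈ range k, a j) / ∏ j ∈ range (k + 1), (x + a j)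
      = 1 / x - (∏ j ∈ range m, a j) / (x * ∏ j ∈ range m, (x + a j)) := by
  induction m with
  | zero => simp
  | succ m ih =>
    have hq : ∏ j ∈ range m, (x + a j) ≠ 0 :=
      prod_ne_zero_iff.mpr fun j hj => ha j (by simp at hj; omega)
    have hm : x + a m ≠ 0 := ha m m.lt_succ_self
    rw [sum_range_succ, ih fun j hj => ha j (by omega), prod_range_succ, prod_range_succ]
    field_simp
    ring

theorem Nat.ascFactorial_succ_eq_mul_succ_ascFactorial (n k : ℕ) :
    n.ascFactorial (k + 1) = n * (n + 1).ascFactorial k :=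
  Nat.ascFactorial_succ.trans (Nat.succ_ascFactorial n k).symm

theorem Nat.cast_ascFactorial_two_mul_add_one {R : Type*} [CommRing R] (a k : ℕ) :
    (a.ascFactorial (2 * k + 1) : R)
      = (a + k) * ∏ j ∈ range k, ((a + k : R) ^ 2 - (j + 1) ^ 2) := by
  induction k generalizing a with
  | zero => simp [Nat.ascFactorial_succ]
  | succ k ih =>
    rw [show 2 * (k + 1) + 1 = (2 * k + 1) + 1 + 1 by ring,
      Nat.ascFactorial_succ_eq_mul_succ_ascFactorial, Nat.ascFactorial_succ]
    push_cast [ih, prod_range_succ]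
    rw [show (a : R) + 1 + k = a + (k + 1) by ring]
    ring

theorem one_div_ascFactorial_sub_one_div_ascFactorial_succ {K : Type*} [Field K] [CharZero K]
    {n : ℕ} (hn : 0 < n) (r : ℕ) :
    (1 : K) / n.ascFactorial r - 1 / (n + 1).ascFactorial r = r / n.ascFactorial (r + 1) := by
  obtain ⟨m, rfl⟩ := Nat.exists_eq_add_of_le' hn
  have hrec : ((m + 1 : ℕ) * (m + 1 + 1).ascFactorial r : K)
      = (m + 1 + r : ℕ) * (m + 1).ascFactorial r := by
    exact_mod_cast Nat.succ_ascFactorial (m + 1) r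
  have h1 : ((m + 1).ascFactorial r : K) ≠ 0 := mod_cast (Nat.ascFactorial_pos m r).ne'
  have h2 : ((m + 1 + 1).ascFactorial r : K) ≠ 0 := mod_cast (Nat.ascFactorial_pos (m + 1) r).ne'
  have h3 : ((m + 1 + r : ℕ) : K) ≠ 0 := mod_cast (show m + 1 + r ≠ 0 by omega)
  rw [Nat.ascFactorial_succ, Nat.cast_mul, div_sub_div _ _ h1 h2,
    div_eq_div_iff (mul_ne_zero h1 h2) (mul_ne_zero h3 h1)]
  push_cast at hrec ⊢
  linear_combination ((m + 1).ascFactorial r : K) * hrec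

theorem Nat.factorial_sq_mul_le_ascFactorial (a k : ℕ) :
    (k + 1)! ^ 2 * (a + k + 2) ≤ (a + 1).ascFactorial (2 * k + 2) := by
  have hsplit : (a + 1).ascFactorial (2 * k + 2)
      = (a + 1).ascFactorial (k + 1) * ((a + k + 2) * (a + k + 3).ascFactorial k) := by
    rw [show 2 * k + 2 = (k + 1) + (k + 1) by ring, ← Nat.ascFactorial_mul_ascFactorial,
      show a + 1 + (k + 1) = a + k + 2 by ring,
      Nat.ascFactorial_succ_eq_mul_succ_ascFactorial (a + k + 2) k]
  have hlow : (k + 1)! ≤ (a + 1).ascFactorial (k + 1) := by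
    rw [← Nat.one_ascFactorial]; exact Nat.ascFactorial_le _ (by omega)
  have hhigh : (k + 1)! ≤ (a + k + 3).ascFactorial k := by
    rw [add_comm k 1, ← Nat.factorial_mul_ascFactorial 1 k, Nat.factorial_one, one_mul]
    exact Nat.ascFactorial_le _ (by omega)
  rw [hsplit]
  calc (k + 1)! ^ 2 * (a + k + 2) = (k + 1)! * ((a + k + 2) * (k + 1)!) := by ring
    _ ≤ _ := by gcongr

theorem Nat.choose_two_mul_mul_factorial_sq (n : ℕ) : (2 * n).choose n * n ! ^ 2 = (2 * n)! := by
  rw [two_mul, sq, ← mul_assoc, Nat.add_choose_mul_factorial_mul_factorial]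

theorem Finset.prod_range_neg_add_one_sq {R : Type*} [CommRing R] (k : ℕ) :
    ∏ j ∈ range k, -((j : R) + 1) ^ 2 = (-1) ^ k * (k ! : R) ^ 2 := by
  rw [← prod_range_add_one_eq_factorial]
  push_cast
  rw [prod_neg, prod_pow, card_range]

theorem hasSum_zeta3 : HasSum (fun n : ℕ => 1 / (n + 1 : ℝ) ^ 3) zeta3 := by
  have h := (summable_nat_add_iff 1).mpr (Real.summable_one_div_nat_pow.mpr (by norm_num : 1 < 3))
  push_cast at h
  exact h.hasSum

namespace Apery

noncomputable def term (n : ℕ) : ℝ :=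
  (-1 : ℝ) ^ (n + 1) / ((n + 1 : ℝ) ^ 3 * (Nat.choose (2 * (n + 1)) (n + 1)))

/-- For `k < N` this is `k!² (N-k-1)! / (N+k+2)!`, the summand of index `k+1` at `n = N+1`. -/
noncomputable def delta (N k : ℕ) : ℝ := (k ! : ℝ) ^ 2 / (N - k).ascFactorial (2 * k + 3)

/-- For `k < N` this is `ε_{N,k+1} = (k+1)!² (N-k-1)! / (2 (k+1)³ (N+k+1)!)`. -/
noncomputable def eps (N k : ℕ) : ℝ :=
  ((k + 1)! : ℝ) ^ 2 / (2 * (k + 1) ^ 3 * (N - k).ascFactorial (2 * k + 2))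

noncomputable def remainder (N : ℕ) : ℝ := ∑ k ∈ range N, (-1) ^ k * eps N k

theorem cast_ascFactorial_eq_mul_prod {N k : ℕ} (hk : k < N) :
    ((N - k).ascFactorial (2 * k + 3) : ℝ)
      = (N + 1) * ∏ j ∈ range (k + 1), ((N + 1 : ℝ) ^ 2 + -((j : ℝ) + 1) ^ 2) := by
  have hcenter : ((N - k : ℕ) : ℝ) + (k + 1 : ℕ) = N + 1 := by
    push_cast [Nat.cast_sub hk.le]; ring
  rw [show 2 * k + 3 = 2 * (k + 1) + 1 by ring, Nat.cast_ascFactorial_two_mul_add_one, hcenter]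
  simp only [sub_eq_add_neg]

theorem two_mul_term (N : ℕ) :
    2 * term N = (-1) ^ (N + 1) * (N ! : ℝ) ^ 2 / ((N + 1) ^ 2 * (2 * N + 1)!) := by
  have hchoose : ((2 * (N + 1)).choose (N + 1) : ℝ)
      = (2 * N + 2) * (2 * N + 1)! / ((N + 1) * N !) ^ 2 := by
    rw [eq_div_iff (by positivity)]
    exact_mod_cast Nat.choose_two_mul_mul_factorial_sq (N + 1)
  rw [term, hchoose]
  field_simp

theorem sum_delta (N : ℕ) :
    ∑ k ∈ range N, (-1) ^ k * delta N k = 1 / (N + 1) ^ 3 + 2 * term N := by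
  have hfactor : ∀ j < N, (N + 1 : ℝ) ^ 2 + -((j : ℝ) + 1) ^ 2 ≠ 0 := fun j hj => by
    have : (j : ℝ) + 1 < N + 1 := by exact_mod_cast Nat.succ_lt_succ hj
    nlinarith
  have hcentral : (N + 1 : ℝ) * ∏ j ∈ range N, ((N + 1 : ℝ) ^ 2 + -((j : ℝ) + 1) ^ 2)
      = (2 * N + 1)! := by
    rw [← Nat.one_ascFactorial, Nat.cast_ascFactorial_two_mul_add_one]
    simp only [sub_eq_add_neg]
    push_cast
    ring_nf
  calc ∑ k ∈ range N, (-1) ^ k * delta N k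
      = (N + 1 : ℝ)⁻¹ * ∑ k ∈ range N,
          (∏ j ∈ range k, -((j : ℝ) + 1) ^ 2) /
            ∏ j ∈ range (k + 1), ((N + 1 : ℝ) ^ 2 + -((j : ℝ) + 1) ^ 2) := by
        rw [mul_sum]
        refine sum_congr rfl fun k hk => ?_
        rw [delta, cast_ascFactorial_eq_mul_prod (mem_range.mp hk), prod_range_neg_add_one_sq]
        field_simp
    _ = (N + 1 : ℝ)⁻¹ * (1 / (N + 1) ^ 2
          - (-1) ^ N * (N ! : ℝ) ^ 2 / ((N + 1) ^ 2 * ((2 * N + 1)! / (N + 1)))) := by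
        rw [sum_range_prod_div_prod_add (by positivity) _ hfactor, prod_range_neg_add_one_sq,
          ← hcentral]
        field_simp
    _ = 1 / (N + 1) ^ 3 + 2 * term N := by
        rw [two_mul_term]
        field_simp
        ring

theorem eps_succ_sub_eps {N k : ℕ} (hk : k < N) : eps (N + 1) k - eps N k = -delta N k := by
  have htel := one_div_ascFactorial_sub_one_div_ascFactorial_succ (K := ℝ)
    (Nat.sub_pos_of_lt hk) (2 * k + 2)
  calc eps (N + 1) k - eps N k
      = -(((k + 1)! : ℝ) ^ 2 / (2 * (k + 1) ^ 3)) *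
          (1 / (N - k).ascFactorial (2 * k + 2) - 1 / (N - k + 1).ascFactorial (2 * k + 2)) := by
        rw [eps, eps, Nat.sub_add_comm hk.le]
        field_simp
        ring
    _ = -delta N k := by
        rw [htel, delta, Nat.factorial_succ]
        push_cast
        field_simp

theorem eps_succ_self (N : ℕ) : (-1) ^ N * eps (N + 1) N = -(term N / 2) := by
  have hchoose : ((2 * (N + 1)).choose (N + 1) : ℝ) * ((N + 1)! : ℝ) ^ 2 = (2 * (N + 1))! := by
    exact_mod_cast Nat.choose_two_mul_mul_factorial_sq (N + 1)
  rw [eps, term, show N + 1 - N = 1 by omega, Nat.one_ascFactorial,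
    show 2 * N + 2 = 2 * (N + 1) by ring, ← hchoose]
  field_simp
  ring

theorem remainder_succ (N : ℕ) :
    remainder (N + 1) = remainder N - (1 / (N + 1) ^ 3 + 5 / 2 * term N) := by
  have hsplit : ∑ k ∈ range N, (-1) ^ k * eps (N + 1) k
      = remainder N - ∑ k ∈ range N, (-1) ^ k * delta N k := by
    rw [remainder, ← sum_sub_distrib]
    refine sum_congr rfl fun k hk => ?_
    linear_combination (-1 : ℝ) ^ k * eps_succ_sub_eps (mem_range.mp hk)
  rw [remainder, sum_range_succ, hsplit, sum_delta, eps_succ_self]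
  ring

theorem sum_range_term (N : ℕ) :
    ∑ n ∈ range N, term n
      = -(2 / 5) * (∑ n ∈ range N, 1 / (n + 1 : ℝ) ^ 3 + remainder N) := by
  have h := sum_range_induction (fun n => 1 / (n + 1 : ℝ) ^ 3 + 5 / 2 * term n)
    (fun N => -remainder N) (by simp [remainder]) N fun k _ => by rw [remainder_succ]; ring
  rw [sum_add_distrib, ← mul_sum] at h
  linarith

theorem eps_nonneg (N k : ℕ) : 0 ≤ eps N k := by
  unfold eps; positivity

theorem eps_le {N k : ℕ} (hk : k < N) :
    eps N k ≤ 1 / (k + 1 : ℝ) ^ 3 / 2 * (1 / (N + 1)) := by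
  obtain ⟨a, rfl⟩ : ∃ a, N = a + k + 1 := ⟨N - k - 1, by omega⟩
  have hle : ((k + 1)! : ℝ) ^ 2 * (a + k + 2) ≤ (a + 1).ascFactorial (2 * k + 2) := by
    exact_mod_cast Nat.factorial_sq_mul_le_ascFactorial a k
  rw [eps, show a + k + 1 - k = a + 1 by omega, div_le_iff₀ (by positivity)]
  calc ((k + 1)! : ℝ) ^ 2 ≤ (a + 1).ascFactorial (2 * k + 2) / (a + k + 2) :=
        (le_div_iff₀ (by positivity)).mpr hle
    _ = _ := by push_cast; field_simp; ring

theorem abs_remainder_le (N : ℕ) : |remainder N| ≤ zeta3 / 2 * (1 / (N + 1)) := by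
  calc |remainder N| ≤ ∑ k ∈ range N, |(-1) ^ k * eps N k| := abs_sum_le_sum_abs _ _
    _ = ∑ k ∈ range N, eps N k := by
        simp [abs_mul, abs_of_nonneg (eps_nonneg _ _)]
    _ ≤ ∑ k ∈ range N, 1 / (k + 1 : ℝ) ^ 3 / 2 * (1 / (N + 1)) :=
        sum_le_sum fun k hk => eps_le (mem_range.mp hk)
    _ ≤ zeta3 / 2 * (1 / (N + 1)) := by
        rw [← sum_mul]
        gcongr
        exact sum_le_hasSum _ (fun k _ => by positivity) (hasSum_zeta3.div_const 2)

theorem tendsto_remainder : Tendsto remainder atTop (𝓝 0) := by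
  refine squeeze_zero_norm abs_remainder_le ?_
  simpa using tendsto_one_div_add_atTop_nhds_zero_nat.const_mul (zeta3 / 2)

theorem summable_term : Summable term := by
  refine hasSum_zeta3.summable.of_norm_bounded fun n => ?_
  have hC : (1 : ℝ) ≤ (2 * (n + 1)).choose (n + 1) := by
    exact_mod_cast Nat.choose_pos (by omega)
  rw [term, norm_div, norm_pow, norm_neg, norm_one, one_pow, Real.norm_of_nonneg (by positivity)]
  exact one_div_le_one_div_of_le (by positivity) (le_mul_of_one_le_right (by positivity) hC)

end Apery

theorem stmt_15 :
    ∑' n : ℕ, (-1 : ℝ) ^ (n + 1) / ((n + 1 : ℝ) ^ 3 * (Nat.choose (2 * (n + 1)) (n + 1)))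
      = -(2 / 5) * zeta3 := by
  have hpartial : Tendsto (fun N => ∑ n ∈ range N, Apery.term n) atTop
      (𝓝 (-(2 / 5) * (zeta3 + 0))) := by
    simp_rw [Apery.sum_range_term]
    exact (hasSum_zeta3.tendsto_sum_nat.add Apery.tendsto_remainder).const_mul _
  rw [add_zero] at hpartial
  exact tendsto_nhds_unique Apery.summable_term.hasSum.tendsto_sum_nat hpartial
end

section
/- For every integer n ≥ 2 and complex c with |c| ≤ 4, the series ∑_{k=1}^∞ c^k/(k^n · binomial(2k,k)) equals the integral ∫₀¹ Li_{n−1}(c·x(1−x))/x dx, where Li_{n−1}(z) = ∑_{k≥1} z^k/k^{n−1}. -/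
/-!
Expanding `Li_{n-1}(c x (1 - x)) / x` as a power series gives the terms
`c^(k+1) / (k+1)^(n-1) · x^k (1 - x)^(k+1)`, and the Beta integral
`∫₀¹ x^k (1 - x)^(k+1) dx = k! (k+1)! / (2k+2)! = 1 / ((k+1) binomial(2k+2, k+1))`
turns them into the terms of the left-hand side. Since the integrands have constant sign
on `[0, 1]`, the integral of the norm of each term is the norm of the corresponding term on
the left, so termwise integration is justified once `∑ 4^k / (k^2 binomial(2k, k))` converges;
this follows from `binomial(2k, k) ≥ 4^k / (2 √k)`.
-/

/-- The complex polylogarithm `Li_s(z) = ∑_{k ≥ 1} z^k / k^s`. -/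
noncomputable def cLi (s : ℕ) (z : ℂ) : ℂ := ∑' k : ℕ, z ^ (k + 1) / (k + 1 : ℂ) ^ s

open scoped Nat
open MeasureTheory Set

theorem Nat.sixteen_pow_le_four_mul_mul_centralBinom_sq {n : ℕ} (hn : 0 < n) :
    16 ^ n ≤ 4 * n * n.centralBinom ^ 2 := by
  induction n, hn using Nat.le_induction with
  | base => decide
  | succ n hn ih =>
    have hrec := Nat.succ_mul_centralBinom_succ n
    refine Nat.le_of_mul_le_mul_left ?_ (show 0 < (n + 1) ^ 2 by positivity)
    calc (n + 1) ^ 2 * 16 ^ (n + 1) = (n + 1) ^ 2 * 16 * 16 ^ n := by ring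
      _ ≤ (n + 1) ^ 2 * 16 * (4 * n * n.centralBinom ^ 2) := Nat.mul_le_mul_left _ ih
      _ ≤ 4 * (n + 1) * (2 * (2 * n + 1) * n.centralBinom) ^ 2 := by
          nlinarith [Nat.zero_le (n.centralBinom ^ 2 * (n + 1))]
      _ = (n + 1) ^ 2 * (4 * (n + 1) * (n + 1).centralBinom ^ 2) := by rw [← hrec]; ring

theorem Nat.four_pow_le_two_mul_sqrt_mul_centralBinom {n : ℕ} (hn : 0 < n) :
    (4 : ℝ) ^ n ≤ 2 * √n * n.centralBinom := by
  refine (pow_le_pow_iff_left₀ (by positivity) (by positivity) two_ne_zero).mp ?_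
  calc ((4 : ℝ) ^ n) ^ 2 = ((16 ^ n : ℕ) : ℝ) := by
        push_cast; rw [← pow_mul, mul_comm, pow_mul]; norm_num
    _ ≤ ((4 * n * n.centralBinom ^ 2 : ℕ) : ℝ) := by
        exact_mod_cast Nat.sixteen_pow_le_four_mul_mul_centralBinom_sq hn
    _ = (2 * √n * n.centralBinom) ^ 2 := by
        push_cast; rw [mul_pow, mul_pow, Real.sq_sqrt (by positivity)]; ring

theorem summable_four_pow_div_sq_mul_centralBinom :
    Summable fun k : ℕ => (4 : ℝ) ^ (k + 1) / ((k + 1) ^ 2 * (k + 1).centralBinom) := by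
  have hp : Summable fun k : ℕ => 2 / ((k + 1 : ℕ) : ℝ) ^ (3 / 2 : ℝ) :=
    ((summable_nat_add_iff 1).mpr
      (Real.summable_one_div_nat_rpow.mpr (by norm_num : (1 : ℝ) < 3 / 2))).mul_left 2
      |>.congr fun k => by ring
  refine hp.of_nonneg_of_le (fun k => by positivity) fun k => ?_
  have hk : (0 : ℝ) < k + 1 := by positivity
  have hb : (0 : ℝ) < (k + 1).centralBinom := by exact_mod_cast (k + 1).centralBinom_pos
  have h32 : ((k + 1 : ℕ) : ℝ) ^ (3 / 2 : ℝ) = (k + 1) * √(k + 1) := by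
    rw [show (3 / 2 : ℝ) = 1 + 1 / 2 by norm_num, Real.rpow_add (by positivity), Real.rpow_one,
      ← Real.sqrt_eq_rpow]; push_cast; ring
  have h4 := Nat.four_pow_le_two_mul_sqrt_mul_centralBinom k.succ_pos
  push_cast at h4
  rw [h32, div_le_div_iff₀ (by positivity) (by positivity)]
  have hs : √((k : ℝ) + 1) * √((k : ℝ) + 1) = k + 1 := Real.mul_self_sqrt hk.le
  calc (4 : ℝ) ^ (k + 1) * ((k + 1) * √(k + 1))
      ≤ 2 * √(k + 1) * (k + 1).centralBinom * ((k + 1) * √(k + 1)) := by gcongr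
    _ = 2 * ((k + 1) ^ 2 * (k + 1).centralBinom) := by
        linear_combination (2 * (k + 1) * ((k + 1).centralBinom : ℝ)) * hs

theorem integral_pow_mul_one_sub_pow (a b : ℕ) :
    ∫ x in (0 : ℝ)..1, x ^ a * (1 - x) ^ b = (a ! * b ! / (a + b + 1)! : ℝ) := by
  have hB := Complex.betaIntegral_eq_Gamma_mul_div (a + 1) (b + 1)
    (by simp; positivity) (by simp; positivity)
  rw [show (a + 1 : ℂ) + (b + 1) = ((a + b + 1 : ℕ) : ℂ) + 1 by push_cast; ring,
    Complex.Gamma_nat_eq_factorial, Complex.Gamma_nat_eq_factorial,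
    Complex.Gamma_nat_eq_factorial, Complex.betaIntegral] at hB
  simp only [add_sub_cancel_right, Complex.cpow_natCast] at hB
  apply Complex.ofReal_injective
  rw [← intervalIntegral.integral_ofReal]
  push_cast
  exact hB

theorem integral_pow_mul_one_sub_pow_succ (k : ℕ) :
    ∫ x in (0 : ℝ)..1, x ^ k * (1 - x) ^ (k + 1)
      = 1 / ((k + 1) * (k + 1).centralBinom : ℝ) := by
  rw [integral_pow_mul_one_sub_pow, Nat.centralBinom_eq_two_mul_choose,
    Nat.cast_choose ℝ (by omega : k + 1 ≤ 2 * (k + 1)),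
    show 2 * (k + 1) - (k + 1) = k + 1 by omega, show k + (k + 1) + 1 = 2 * (k + 1) by ring]
  push_cast [Nat.factorial_succ k]
  field_simp

theorem cLi_mul_div_eq_tsum (s : ℕ) (c : ℂ) {x : ℝ} (hx : x ≠ 0) :
    cLi s (c * x * (1 - x)) / x
      = ∑' k : ℕ,
          c ^ (k + 1) / (k + 1 : ℂ) ^ s * ((x ^ k * (1 - x) ^ (k + 1) : ℝ) : ℂ) := by
  rw [cLi, ← tsum_div_const]
  congr 1 with k
  have : (x : ℂ) ≠ 0 := by exact_mod_cast hx
  push_cast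
  rw [mul_pow, mul_pow]
  field_simp
  ring

theorem summable_norm_pow_div_pow_mul_centralBinom {n : ℕ} (hn : 2 ≤ n) {c : ℂ}
    (hc : ‖c‖ ≤ 4) :
    Summable fun k : ℕ => ‖c ^ (k + 1) / ((k + 1 : ℂ) ^ n * (k + 1).centralBinom)‖ := by
  refine summable_four_pow_div_sq_mul_centralBinom.of_nonneg_of_le (fun k => norm_nonneg _)
    fun k => ?_
  have hk : (1 : ℝ) ≤ k + 1 := by simp
  rw [norm_div, norm_mul, norm_pow, norm_pow, ← Nat.cast_succ, Complex.norm_natCast,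
    Complex.norm_natCast]
  push_cast
  have hb : (0 : ℝ) < (k + 1).centralBinom := by exact_mod_cast (k + 1).centralBinom_pos
  gcongr

theorem setIntegral_Ioc_mul_pow_mul_one_sub_pow_succ (A : ℂ) (k : ℕ) :
    ∫ x in Ioc (0 : ℝ) 1, A * ((x ^ k * (1 - x) ^ (k + 1) : ℝ) : ℂ)
      = A / ((k + 1) * (k + 1).centralBinom) := by
  rw [integral_const_mul, integral_complex_ofReal, ← intervalIntegral.integral_of_le zero_le_one,
    integral_pow_mul_one_sub_pow_succ]
  push_cast
  ring

theorem setIntegral_Ioc_norm_mul_pow_mul_one_sub_pow_succ (A : ℂ) (k : ℕ) :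
    ∫ x in Ioc (0 : ℝ) 1, ‖A * ((x ^ k * (1 - x) ^ (k + 1) : ℝ) : ℂ)‖
      = ‖A / ((k + 1) * (k + 1).centralBinom)‖ := by
  have hnorm : EqOn (fun x : ℝ => ‖A * ((x ^ k * (1 - x) ^ (k + 1) : ℝ) : ℂ)‖)
      (fun x => ‖A‖ * (x ^ k * (1 - x) ^ (k + 1))) (Ioc 0 1) := fun x hx => by
    have : 0 ≤ 1 - x := sub_nonneg.mpr hx.2
    dsimp only
    rw [norm_mul, Complex.norm_real,
      Real.norm_of_nonneg (mul_nonneg (pow_nonneg hx.1.le _) (pow_nonneg this _))]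
  rw [setIntegral_congr_fun measurableSet_Ioc hnorm, integral_const_mul,
    ← intervalIntegral.integral_of_le zero_le_one, integral_pow_mul_one_sub_pow_succ, norm_div,
    norm_mul, ← Nat.cast_succ (R := ℂ), Complex.norm_natCast, Complex.norm_natCast]
  push_cast
  ring

theorem stmt_19 (n : ℕ) (hn : 2 ≤ n) (c : ℂ) (hc : ‖c‖ ≤ 4) :
    ∑' k : ℕ, c ^ (k + 1)
        / ((k + 1 : ℂ) ^ n * (Nat.choose (2 * (k + 1)) (k + 1) : ℂ))
      = ∫ x in (0:ℝ)..1, cLi (n - 1) (c * x * (1 - x)) / (x : ℂ) := by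
  obtain ⟨s, rfl⟩ : ∃ s, n = s + 1 := ⟨n - 1, by omega⟩
  simp_rw [← Nat.centralBinom_eq_two_mul_choose]
  set F : ℕ → ℝ → ℂ := fun k x =>
    c ^ (k + 1) / (k + 1 : ℂ) ^ s * ((x ^ k * (1 - x) ^ (k + 1) : ℝ) : ℂ)
  have hF_int : ∀ k, Integrable (F k) (volume.restrict (Ioc 0 1)) := fun k =>
    Continuous.integrableOn_Ioc (by fun_prop)
  have hF_sum : Summable fun k => ∫ x in Ioc (0 : ℝ) 1, ‖F k x‖ := by
    refine (summable_norm_pow_div_pow_mul_centralBinom hn hc).congr fun k => ?_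
    rw [setIntegral_Ioc_norm_mul_pow_mul_one_sub_pow_succ, div_div, pow_succ _ s, mul_assoc]
  rw [Nat.add_sub_cancel, intervalIntegral.integral_of_le zero_le_one,
    setIntegral_congr_fun measurableSet_Ioc fun x hx => cLi_mul_div_eq_tsum s c hx.1.ne',
    ← integral_tsum_of_summable_integral_norm hF_int hF_sum]
  refine tsum_congr fun k => ?_
  rw [setIntegral_Ioc_mul_pow_mul_one_sub_pow_succ, div_div, pow_succ _ s, mul_assoc]
end
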